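/- arXiv:2103.10812 — 6 statements merged into one kernel-verified Lean document; each statement's English description precedes it below -/
import Mathlib

section
/- The pair of functions u(x) = -(3√2/2)·sech²(x/(2β)) and η(x) = -(3/2)·sech²(x/(2β)) satisfies the stationary Boussinesq system β²η'' = η + u²/2 and β²u'' = u(1+η) for all real x, where β > 0. -/
/-!
The profile `f = sech²` satisfies `f'' = 4 f - 6 f²` (because `cosh² - sinh² = 1`), so after the
rescaling `y = x / (2β)` the function `η = -(3/2) f` satisfies `β² η'' = η + η²`. Since `u = √2 η`,
we have `u² / 2 = η²` and `β² u'' = √2 (η + η²) = u (1 + η)`.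
-/

noncomputable def sech (y : ℝ) : ℝ := 2 / (Real.exp y + Real.exp (-y))

open Real

theorem deriv_deriv_const_mul_comp_mul {𝕜 : Type*} [NontriviallyNormedField 𝕜]
    (f : 𝕜 → 𝕜) (A c x : 𝕜) :
    deriv (deriv fun x => A * f (c * x)) x = A * c ^ 2 * deriv (deriv f) (c * x) := by
  have hfirst : deriv (fun x => A * f (c * x)) = fun x => A * (c * deriv f (c * x)) := by
    rw [deriv_const_mul_field']
    funext x
    rw [deriv_comp_mul_left, smul_eq_mul]
  rw [hfirst, deriv_const_mul_field, deriv_const_mul_field, deriv_comp_mul_left, smul_eq_mul]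
  ring

theorem sech_eq_inv_cosh (y : ℝ) : sech y = (cosh y)⁻¹ := by
  rw [sech, cosh_eq, inv_div]

theorem hasDerivAt_sech_sq (y : ℝ) :
    HasDerivAt (fun y => sech y ^ 2) (-2 * sinh y / cosh y ^ 3) y := by
  have hc : cosh y ≠ 0 := (cosh_pos y).ne'
  simp only [sech_eq_inv_cosh, inv_pow]
  refine (((hasDerivAt_cosh y).fun_pow 2).fun_inv (pow_ne_zero 2 hc)).congr_deriv ?_
  field_simp
  ring

theorem deriv_sech_sq : deriv (fun y => sech y ^ 2) = fun y => -2 * sinh y / cosh y ^ 3 :=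
  funext fun y => (hasDerivAt_sech_sq y).deriv

theorem deriv_deriv_sech_sq (y : ℝ) :
    deriv (deriv fun y => sech y ^ 2) y = 4 * sech y ^ 2 - 6 * sech y ^ 4 := by
  have hc : cosh y ≠ 0 := (cosh_pos y).ne'
  have hquot := ((hasDerivAt_sinh y).const_mul (-2)).fun_div ((hasDerivAt_cosh y).fun_pow 3)
    (pow_ne_zero 3 hc)
  rw [deriv_sech_sq, hquot.deriv, sech_eq_inv_cosh]
  field_simp
  rw [sinh_sq]
  ring

theorem stmt_0 (β : ℝ) (hβ : 0 < β)
    (u η : ℝ → ℝ)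
    (hu : u = fun x => -(3 * Real.sqrt 2 / 2) * (sech (x / (2 * β)))^2)
    (hη : η = fun x => -(3 / 2) * (sech (x / (2 * β)))^2) :
    ∀ x : ℝ,
      β^2 * deriv (deriv η) x = η x + (u x)^2 / 2 ∧
      β^2 * deriv (deriv u) x = u x * (1 + η x) := by
  intro x
  have hscale : ∀ x, x / (2 * β) = (2 * β)⁻¹ * x := fun x => div_eq_inv_mul x _
  have hβ2 : β ^ 2 * (2 * β)⁻¹ ^ 2 = 1 / 4 := by field_simp; ring
  have hsqrt : √2 ^ 2 = 2 := sq_sqrt zero_le_two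
  subst hu hη
  simp only [hscale, deriv_deriv_const_mul_comp_mul (fun y => sech y ^ 2), deriv_deriv_sech_sq]
  set s := sech ((2 * β)⁻¹ * x)
  constructor
  · linear_combination -(3 / 2) * (4 * s ^ 2 - 6 * s ^ 4) * hβ2 - 9 / 8 * s ^ 4 * hsqrt
  · linear_combination -(3 * √2 / 2) * (4 * s ^ 2 - 6 * s ^ 4) * hβ2
end

section
/- Any nontrivial solitary wave solution (u, η) of the stationary system β²η'' = η + u²/2, β²u'' = u(1+η) with (u, η) → (0,0) at ±∞ satisfies η(x) < 0 for all x ∈ ℝ. -/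
/-!
If `η` took a positive value, then, since it vanishes at infinity, it would attain a positive
global maximum `x₀`, where `β² η''(x₀) ≤ 0 < η(x₀) + u(x₀)²/2`. Hence `η ≤ 0`. If `η(z) = 0`,
then `z` is a global maximum, so `η'(z) = 0` and `u(z)²/2 ≤ -η(z) = 0`, and the first integral
gives `u'(z) = 0`. Thus `(u, η, u', η')` vanishes at `z`, and uniqueness for this ODE with
polynomial (hence locally Lipschitz) right-hand side gives `u = η = 0`.
-/

open Set Filter Topology

theorem ODE_solution_unique_of_contDiff {E : Type*} [NormedAddCommGroup E] [NormedSpace ℝ E]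
    {v : E → E} (hv : ContDiff ℝ 1 v) {f g : ℝ → E}
    (hf : ∀ t, HasDerivAt f (v (f t)) t) (hg : ∀ t, HasDerivAt g (v (g t)) t)
    {t₀ : ℝ} (heq : f t₀ = g t₀) : f = g := by
  funext t
  obtain ⟨a, b, ht, ht₀⟩ : ∃ a b, t ∈ Ioo a b ∧ t₀ ∈ Ioo a b :=
    ⟨min t t₀ - 1, max t t₀ + 1, by constructor <;> constructor <;> grind⟩
  set s := f '' Icc a b ∪ g '' Icc a b
  have hs : IsCompact s :=
    (isCompact_Icc.image (continuous_iff_continuousAt.2 fun x => (hf x).continuousAt)).union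
      (isCompact_Icc.image (continuous_iff_continuousAt.2 fun x => (hg x).continuousAt))
  obtain ⟨K, hK⟩ := hv.locallyLipschitz.locallyLipschitzOn.exists_lipschitzOnWith_of_compact hs
  exact ODE_solution_unique_of_mem_Ioo (fun _ _ => hK) ht₀
    (fun t ht => ⟨hf t, .inl ⟨t, Ioo_subset_Icc_self ht, rfl⟩⟩)
    (fun t ht => ⟨hg t, .inr ⟨t, Ioo_subset_Icc_self ht, rfl⟩⟩) heq ht

theorem ODE_second_order_solution_unique_of_contDiff {E : Type*} [NormedAddCommGroup E]
    [NormedSpace ℝ E] {F : E → E} (hF : ContDiff ℝ 1 F) {q q' r r' : ℝ → E}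
    (hq : ∀ t, HasDerivAt q (q' t) t) (hq' : ∀ t, HasDerivAt q' (F (q t)) t)
    (hr : ∀ t, HasDerivAt r (r' t) t) (hr' : ∀ t, HasDerivAt r' (F (r t)) t)
    {t₀ : ℝ} (h₀ : q t₀ = r t₀) (h₁ : q' t₀ = r' t₀) : q = r := by
  have h := ODE_solution_unique_of_contDiff (v := fun p : E × E => (p.2, F p.1)) (by fun_prop)
    (f := fun t => (q t, q' t)) (g := fun t => (r t, r' t))
    (fun t => (hq t).prodMk (hq' t)) (fun t => (hr t).prodMk (hr' t)) (Prod.ext h₀ h₁)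
  exact funext fun t => congrArg Prod.fst (congrFun h t)

theorem deriv_deriv_nonpos_of_isLocalMax {f : ℝ → ℝ} {x : ℝ} (hmax : IsLocalMax f x)
    (hf : ContinuousAt f x) : deriv (deriv f) x ≤ 0 := by
  by_contra! hpos
  -- then `x` is also a local minimum, so `f` is locally constant near `x`
  have hmin := isLocalMin_of_deriv_deriv_pos hpos hmax.deriv_eq_zero hf
  have hconst : f =ᶠ[𝓝 x] fun _ => f x :=
    (hmax.and hmin).mono fun y hy => le_antisymm hy.1 hy.2
  refine hpos.ne' ?_
  rw [hconst.deriv.deriv_eq]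
  simp

theorem eq_of_hasDerivAt_zero_of_tendsto_cocompact {E : Type*} [NormedAddCommGroup E]
    [NormedSpace ℝ E] {f : ℝ → E} (hf : ∀ x, HasDerivAt f 0 x) {c : E}
    (hc : Tendsto f (cocompact ℝ) (𝓝 c)) (x : ℝ) : f x = c := by
  have hconst := is_const_of_deriv_eq_zero (fun y => (hf y).differentiableAt)
    (fun y => (hf y).deriv)
  exact tendsto_nhds_unique tendsto_const_nhds (hc.congr fun y => hconst y x)

section SolitaryWave

variable {β : ℝ} {u η : ℝ → ℝ}

theorem solitaryWave_first_integral (hu : ContDiff ℝ 2 u) (hη : ContDiff ℝ 2 η)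
    (heqη : ∀ x, β^2 * deriv (deriv η) x = η x + (u x)^2 / 2)
    (hequ : ∀ x, β^2 * deriv (deriv u) x = u x * (1 + η x))
    (hu0 : Tendsto u (cocompact ℝ) (𝓝 0)) (hu0' : Tendsto (deriv u) (cocompact ℝ) (𝓝 0))
    (hη0 : Tendsto η (cocompact ℝ) (𝓝 0)) (hη0' : Tendsto (deriv η) (cocompact ℝ) (𝓝 0))
    (x : ℝ) :
    β^2 * (deriv u x)^2 + β^2 * (deriv η x)^2 = (u x)^2 * (1 + η x) + (η x)^2 := by
  set F : ℝ → ℝ := fun t =>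
    β^2 * (deriv u t)^2 + β^2 * (deriv η t)^2 - ((u t)^2 * (1 + η t) + (η t)^2)
  have hF : ∀ y, HasDerivAt F 0 y := by
    intro y
    have hu₁ := (hu.differentiable two_ne_zero y).hasDerivAt
    have hu₂ := (hu.differentiable_deriv_two y).hasDerivAt
    have hη₁ := (hη.differentiable two_ne_zero y).hasDerivAt
    have hη₂ := (hη.differentiable_deriv_two y).hasDerivAt
    refine ((((hu₂.fun_pow 2).const_mul (β^2)).fun_add ((hη₂.fun_pow 2).const_mul (β^2))).fun_sub
      (((hu₁.fun_pow 2).fun_mul (hη₁.const_add 1)).fun_add (hη₁.fun_pow 2))).congr_deriv ?_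
    linear_combination (2 * deriv u y) * hequ y + 2 * deriv η y * heqη y
  have hlim : Tendsto F (cocompact ℝ) (𝓝 0) := by
    simpa using (((hu0'.pow 2).const_mul (β^2)).add ((hη0'.pow 2).const_mul (β^2))).sub
      (((hu0.pow 2).mul (hη0.const_add 1)).add (hη0.pow 2))
  exact sub_eq_zero.1 (eq_of_hasDerivAt_zero_of_tendsto_cocompact hF hlim x)

theorem solitaryWave_eta_add_sq_nonpos_of_isMaxOn (hη : ContDiff ℝ 2 η)
    (heqη : ∀ x, β^2 * deriv (deriv η) x = η x + (u x)^2 / 2)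
    {x₀ : ℝ} (hmax : IsMaxOn η univ x₀) : η x₀ + (u x₀)^2 / 2 ≤ 0 := by
  rw [← heqη]
  exact mul_nonpos_of_nonneg_of_nonpos (sq_nonneg β)
    (deriv_deriv_nonpos_of_isLocalMax (hmax.isLocalMax univ_mem) hη.continuous.continuousAt)

theorem solitaryWave_eta_nonpos (hη : ContDiff ℝ 2 η)
    (heqη : ∀ x, β^2 * deriv (deriv η) x = η x + (u x)^2 / 2)
    (hη0 : Tendsto η (cocompact ℝ) (𝓝 0)) (x : ℝ) : η x ≤ 0 := by
  by_contra! hpos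
  obtain ⟨x₀, hx₀⟩ := hη.continuous.exists_forall_ge' x
    ((hη0.eventually (gt_mem_nhds hpos)).mono fun _ => le_of_lt)
  have := solitaryWave_eta_add_sq_nonpos_of_isMaxOn hη heqη (fun y _ => hx₀ y)
  nlinarith [hx₀ x, sq_nonneg (u x₀)]

theorem solitaryWave_eq_zero_of_eta_eq_zero (hβ : β ≠ 0)
    (hu : ContDiff ℝ 2 u) (hη : ContDiff ℝ 2 η)
    (heqη : ∀ x, β^2 * deriv (deriv η) x = η x + (u x)^2 / 2)
    (hequ : ∀ x, β^2 * deriv (deriv u) x = u x * (1 + η x))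
    (hu0 : Tendsto u (cocompact ℝ) (𝓝 0)) (hu0' : Tendsto (deriv u) (cocompact ℝ) (𝓝 0))
    (hη0 : Tendsto η (cocompact ℝ) (𝓝 0)) (hη0' : Tendsto (deriv η) (cocompact ℝ) (𝓝 0))
    {z : ℝ} (hz : η z = 0) (x : ℝ) : u x = 0 ∧ η x = 0 := by
  have hmax : IsMaxOn η univ z := fun y _ => hz ▸ solitaryWave_eta_nonpos hη heqη hη0 y
  have huz : u z = 0 := by
    have := solitaryWave_eta_add_sq_nonpos_of_isMaxOn hη heqη hmax
    rw [hz] at this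
    nlinarith [sq_nonneg (u z)]
  have hηz' : deriv η z = 0 := (hmax.isLocalMax univ_mem).deriv_eq_zero
  have huz' : deriv u z = 0 := by
    have := solitaryWave_first_integral hu hη heqη hequ hu0 hu0' hη0 hη0' z
    rw [hz, huz, hηz'] at this
    simpa [hβ] using this
  have hβ2 : β^2 ≠ 0 := pow_ne_zero 2 hβ
  have hu'' : ∀ t, deriv (deriv u) t = u t * (1 + η t) / β^2 := fun t => by
    rw [← hequ, mul_div_cancel_left₀ _ hβ2]
  have hη'' : ∀ t, deriv (deriv η) t = (η t + (u t)^2 / 2) / β^2 := fun t => by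
    rw [← heqη, mul_div_cancel_left₀ _ hβ2]
  have h := ODE_second_order_solution_unique_of_contDiff
    (F := fun p : ℝ × ℝ => (p.1 * (1 + p.2) / β^2, (p.2 + p.1^2 / 2) / β^2)) (by fun_prop)
    (q := fun t => (u t, η t)) (q' := fun t => (deriv u t, deriv η t))
    (r := fun _ => 0) (r' := fun _ => 0)
    (fun t => (hu.differentiable two_ne_zero t).hasDerivAt.prodMk
      (hη.differentiable two_ne_zero t).hasDerivAt)
    (fun t => by
      simpa only [hu'', hη''] using (hu.differentiable_deriv_two t).hasDerivAt.prodMk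
        (hη.differentiable_deriv_two t).hasDerivAt)
    (fun _ => hasDerivAt_const _ _)
    (fun _ => (hasDerivAt_const _ _).congr_deriv (by simp [Prod.zero_eq_mk]))
    (t₀ := z) (by simp [huz, hz]) (by simp [huz', hηz'])
  simpa using congrFun h x

end SolitaryWave

theorem stmt_2 (β : ℝ) (hβ : 0 < β)
    (u η : ℝ → ℝ)
    (hu : ContDiff ℝ 2 u) (hη : ContDiff ℝ 2 η)
    (heqη : ∀ x, β^2 * deriv (deriv η) x = η x + (u x)^2 / 2)
    (hequ : ∀ x, β^2 * deriv (deriv u) x = u x * (1 + η x))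
    (hu0 : Filter.Tendsto u (Filter.cocompact ℝ) (nhds 0))
    (hu0' : Filter.Tendsto (deriv u) (Filter.cocompact ℝ) (nhds 0))
    (hη0 : Filter.Tendsto η (Filter.cocompact ℝ) (nhds 0))
    (hη0' : Filter.Tendsto (deriv η) (Filter.cocompact ℝ) (nhds 0))
    (hnontriv : ¬ (∀ x, u x = 0 ∧ η x = 0)) :
    ∀ x : ℝ, η x < 0 := fun x =>
  (solitaryWave_eta_nonpos hη heqη hη0 x).lt_of_ne fun hx =>
    hnontriv (solitaryWave_eq_zero_of_eta_eq_zero hβ.ne' hu hη heqη hequ hu0 hu0' hη0 hη0' hx)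
end

section
/- Let (u, η) be a solitary wave solution of the stationary system β²η'' = η + u²/2, β²u'' = u(1+η) with u(x) < √2 for all x. Then u = √2·η on ℝ. -/
/-!
The difference `h = u - √2 η` solves `β² h'' = (1 - u/√2) h`, whose coefficient is positive
when `u < √2`. At a positive maximum of `h` (which exists since `h` vanishes at infinity) the
equation would force `h'' > 0`, contradicting the second-derivative test; so `h ≤ 0`, and
likewise `-h ≤ 0`.
-/

open Filter Topology

theorem IsLocalMax.deriv_deriv_nonpos {f : ℝ → ℝ} {x₀ : ℝ} (hmax : IsLocalMax f x₀)
    (hc : ContinuousAt f x₀) : deriv (deriv f) x₀ ≤ 0 := by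
  by_contra! hpos
  have hmin : IsLocalMin f x₀ := isLocalMin_of_deriv_deriv_pos hpos hmax.deriv_eq_zero hc
  -- the second-derivative test only yields a non-strict minimum, so argue via local constancy
  have hconst : f =ᶠ[𝓝 x₀] fun _ ↦ f x₀ := by
    filter_upwards [hmin, hmax] with y hy₁ hy₂ using le_antisymm hy₂ hy₁
  have hderiv : deriv f =ᶠ[𝓝 x₀] fun _ ↦ 0 := by
    filter_upwards [hconst.eventuallyEq_nhds] with y hy
    rw [hy.deriv_eq, deriv_const]
  rw [hderiv.deriv_eq, deriv_const] at hpos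
  exact lt_irrefl 0 hpos

theorem nonpos_of_tendsto_cocompact_of_deriv_deriv_pos {f : ℝ → ℝ} (hf : Continuous f)
    (h0 : Tendsto f (cocompact ℝ) (𝓝 0)) (hpos : ∀ x, 0 < f x → 0 < deriv (deriv f) x)
    (x : ℝ) : f x ≤ 0 := by
  by_contra! hx
  obtain ⟨x₀, hx₀⟩ := hf.exists_forall_ge' x (h0.eventually (eventually_le_nhds hx))
  have hmax : IsLocalMax f x₀ := Eventually.of_forall hx₀
  exact (hmax.deriv_deriv_nonpos hf.continuousAt).not_gt (hpos x₀ (hx.trans_le (hx₀ x)))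

section LinearODE

variable {f c : ℝ → ℝ} {k : ℝ}

theorem nonpos_of_mul_deriv_deriv_eq_mul (hk : 0 ≤ k) (hc : ∀ x, 0 < c x) (hf : Continuous f)
    (h0 : Tendsto f (cocompact ℝ) (𝓝 0)) (hode : ∀ x, k * deriv (deriv f) x = c x * f x)
    (x : ℝ) : f x ≤ 0 :=
  nonpos_of_tendsto_cocompact_of_deriv_deriv_pos hf h0
    (fun y hy ↦ pos_of_mul_pos_right ((hode y).symm ▸ mul_pos (hc y) hy) hk) x

theorem eq_zero_of_mul_deriv_deriv_eq_mul (hk : 0 ≤ k) (hc : ∀ x, 0 < c x) (hf : Continuous f)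
    (h0 : Tendsto f (cocompact ℝ) (𝓝 0)) (hode : ∀ x, k * deriv (deriv f) x = c x * f x)
    (x : ℝ) : f x = 0 := by
  have hode_neg (y : ℝ) : k * deriv (deriv (-f)) y = c y * (-f) y := by
    simp [hode]
  have h0_neg : Tendsto (-f) (cocompact ℝ) (𝓝 0) := by
    simpa only [neg_zero, Pi.neg_def] using h0.neg
  exact le_antisymm (nonpos_of_mul_deriv_deriv_eq_mul hk hc hf h0 hode x)
    (neg_nonpos.mp (nonpos_of_mul_deriv_deriv_eq_mul hk hc hf.neg h0_neg hode_neg x))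

end LinearODE

theorem deriv_deriv_sub_const_mul {u η : ℝ → ℝ} (hu : ContDiff ℝ 2 u) (hη : ContDiff ℝ 2 η)
    (a x : ℝ) :
    deriv (deriv fun y ↦ u y - a * η y) x = deriv (deriv u) x - a * deriv (deriv η) x := by
  have hderiv : deriv (fun y ↦ u y - a * η y) = fun y ↦ deriv u y - a * deriv η y := by
    funext y
    have hηy := (hη.differentiable two_ne_zero y).const_mul a
    rw [deriv_fun_sub (hu.differentiable two_ne_zero y) hηy,
      deriv_const_mul a (hη.differentiable two_ne_zero y)]
  have hη'x := hη.differentiable_deriv_two x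
  rw [hderiv, deriv_fun_sub (hu.differentiable_deriv_two x) (hη'x.const_mul a),
    deriv_const_mul a hη'x]

theorem deriv_deriv_sub_sqrt_two_mul {β : ℝ} {u η : ℝ → ℝ} (hu : ContDiff ℝ 2 u)
    (hη : ContDiff ℝ 2 η) (heqη : ∀ x, β ^ 2 * deriv (deriv η) x = η x + u x ^ 2 / 2)
    (hequ : ∀ x, β ^ 2 * deriv (deriv u) x = u x * (1 + η x)) (x : ℝ) :
    β ^ 2 * deriv (deriv fun y ↦ u y - √2 * η y) x = (1 - u x / √2) * (u x - √2 * η x) := by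
  have hs : √2 * √2 = 2 := Real.mul_self_sqrt zero_le_two
  have hinv : u x / √2 = u x * √2 / 2 := by
    rw [div_eq_iff (by positivity)]
    linear_combination (-u x / 2) * hs
  rw [deriv_deriv_sub_const_mul hu hη, mul_sub, ← mul_left_comm, hequ, heqη, hinv]
  linear_combination (-u x * η x / 2) * hs

theorem stmt_5_general (β : ℝ)
    (u η : ℝ → ℝ)
    (hu : ContDiff ℝ 2 u) (hη : ContDiff ℝ 2 η)
    (heqη : ∀ x, β^2 * deriv (deriv η) x = η x + (u x)^2 / 2)
    (hequ : ∀ x, β^2 * deriv (deriv u) x = u x * (1 + η x))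
    (hu0 : Filter.Tendsto u (Filter.cocompact ℝ) (nhds 0))
    (hη0 : Filter.Tendsto η (Filter.cocompact ℝ) (nhds 0))
    (hlt : ∀ x, u x < Real.sqrt 2) :
    ∀ x : ℝ, u x = Real.sqrt 2 * η x := by
  have hcoef (x : ℝ) : 0 < 1 - u x / √2 := by
    rw [sub_pos, div_lt_one (by positivity)]
    exact hlt x
  have hlim : Tendsto (fun y ↦ u y - √2 * η y) (cocompact ℝ) (𝓝 0) := by
    simpa using hu0.sub (hη0.const_mul √2)
  intro x
  have hzero := eq_zero_of_mul_deriv_deriv_eq_mul (f := fun y ↦ u y - √2 * η y)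
    (sq_nonneg β) hcoef (hu.continuous.sub (continuous_const.mul hη.continuous)) hlim
    (deriv_deriv_sub_sqrt_two_mul hu hη heqη hequ) x
  exact sub_eq_zero.mp hzero

theorem stmt_5 (β : ℝ) (hβ : 0 < β)
    (u η : ℝ → ℝ)
    (hu : ContDiff ℝ 2 u) (hη : ContDiff ℝ 2 η)
    (heqη : ∀ x, β^2 * deriv (deriv η) x = η x + (u x)^2 / 2)
    (hequ : ∀ x, β^2 * deriv (deriv u) x = u x * (1 + η x))
    (hu0 : Filter.Tendsto u (Filter.cocompact ℝ) (nhds 0))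
    (hu0' : Filter.Tendsto (deriv u) (Filter.cocompact ℝ) (nhds 0))
    (hη0 : Filter.Tendsto η (Filter.cocompact ℝ) (nhds 0))
    (hη0' : Filter.Tendsto (deriv η) (Filter.cocompact ℝ) (nhds 0))
    (hnontriv : ¬ (∀ x, u x = 0 ∧ η x = 0))
    (hlt : ∀ x, u x < Real.sqrt 2) :
    ∀ x : ℝ, u x = Real.sqrt 2 * η x :=
  stmt_5_general β u η hu hη heqη hequ hu0 hη0 hlt
end

section
/- Let β > 0, G(x) = (1/(2β))e^{-|x|/β}, and let V : ℝ → ℝ² be a bounded continuous function satisfying V(x) = -∫_ℝ G(x-y) M(y) V(y) dy, where M : ℝ → Mat₂(ℝ) is continuous with |M(y)| ≤ C e^{-|y|/β} for some C. If additionally |G(x-y)G(y)/G(x)| ≲ 1 uniformly, then |V(x)|/G(x) is bounded on ℝ. -/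
open MeasureTheory Real Set

lemma integrable_exp_neg_mul_abs' (r : ℝ) (hr : 0 < r) :
    Integrable (fun y : ℝ => Real.exp (-(r * |y|))) := by
  have hIoi : IntegrableOn (fun y : ℝ => Real.exp (-(r * |y|))) (Ioi 0) := by
    refine (exp_neg_integrableOn_Ioi 0 hr).congr_fun (fun y hy => ?_) measurableSet_Ioi
    simp only [abs_of_pos (show (0:ℝ) < y from hy), neg_mul]
  have hIic : IntegrableOn (fun y : ℝ => Real.exp (-(r * |y|))) (Iic 0) := by
    rw [← Measure.map_neg_eq_self (volume : Measure ℝ)]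
    have m : MeasurableEmbedding fun x : ℝ => -x := (Homeomorph.neg ℝ).measurableEmbedding
    rw [m.integrableOn_map_iff]
    simp_rw [Function.comp_def, abs_neg, neg_preimage, neg_Iic, neg_zero]
    exact (integrableOn_Ici_iff_integrableOn_Ioi).mpr hIoi
  have := hIic.union hIoi
  rwa [Iic_union_Ioi, integrableOn_univ] at this

lemma mv_bound (A : Matrix (Fin 2) (Fin 2) ℝ) (a : ℝ) (ha : 0 ≤ a)
    (hA : ∀ i j, |A i j| ≤ a) (v : Fin 2 → ℝ) : ‖A.mulVec v‖ ≤ 2 * a * ‖v‖ := by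
  rw [pi_norm_le_iff_of_nonneg (by positivity)]
  intro i
  rw [Real.norm_eq_abs]
  have hv : A.mulVec v i = A i 0 * v 0 + A i 1 * v 1 := by
    simp [Matrix.mulVec, dotProduct, Fin.sum_univ_two]
  rw [hv]
  have h0 : |v 0| ≤ ‖v‖ := by simpa using norm_le_pi_norm v 0
  have h1 : |v 1| ≤ ‖v‖ := by simpa using norm_le_pi_norm v 1
  calc |A i 0 * v 0 + A i 1 * v 1| ≤ |A i 0 * v 0| + |A i 1 * v 1| := abs_add_le _ _
    _ = |A i 0| * |v 0| + |A i 1| * |v 1| := by rw [abs_mul, abs_mul]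
    _ ≤ a * ‖v‖ + a * ‖v‖ := by
        exact add_le_add (mul_le_mul (hA i 0) h0 (abs_nonneg _) ha)
          (mul_le_mul (hA i 1) h1 (abs_nonneg _) ha)
    _ = 2 * a * ‖v‖ := by ring

theorem stmt_9 (β : ℝ) (hβ : 0 < β)
    (G : ℝ → ℝ) (hG : G = fun x => (1 / (2 * β)) * Real.exp (-|x| / β))
    (V : ℝ → Fin 2 → ℝ) (hVcont : Continuous V)
    (hVbdd : ∃ K : ℝ, ∀ x, ‖V x‖ ≤ K)
    (M : ℝ → Matrix (Fin 2) (Fin 2) ℝ)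
    (hMcont : ∀ i j, Continuous (fun y => M y i j))
    (C : ℝ) (hM : ∀ y i j, |M y i j| ≤ C * Real.exp (-|y| / β))
    (hint : ∀ x, V x = -∫ y : ℝ, G (x - y) • (M y).mulVec (V y)) :
    ∃ C' : ℝ, ∀ x, ‖V x‖ ≤ C' * G x := by
  obtain ⟨K, hK⟩ := hVbdd
  have hβ' : β ≠ 0 := ne_of_gt hβ
  have hK0 : 0 ≤ K := (norm_nonneg _).trans (hK 0)
  have hC0 : 0 ≤ C := le_trans (abs_nonneg _) (by simpa using hM 0 0 0)
  have hrpos : 0 < 1 / (2 * β) := by positivity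
  set r : ℝ := 1 / (2 * β) with hr
  have hb : β⁻¹ = 2 * r := by rw [hr]; field_simp
  have hIint : Integrable (fun y : ℝ => Real.exp (-(r * |y|))) :=
    integrable_exp_neg_mul_abs' r hrpos
  set I : ℝ := ∫ y : ℝ, Real.exp (-(r * |y|)) with hI
  have hI0 : 0 ≤ I := integral_nonneg fun y => (Real.exp_pos _).le
  have hGnn : ∀ z, 0 ≤ G z := by
    intro z; rw [hG]; positivity
  -- master step
  have master : ∀ (x : ℝ) (c : ℝ),
      (∀ y, G (x - y) * (2 * C * Real.exp (-|y| / β) * ‖V y‖) ≤ c * Real.exp (-(r * |y|))) →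
      ‖V x‖ ≤ c * I := by
    intro x c hpt
    calc ‖V x‖ = ‖∫ y : ℝ, G (x - y) • (M y).mulVec (V y)‖ := by rw [hint x, norm_neg]
      _ ≤ ∫ y : ℝ, ‖G (x - y) • (M y).mulVec (V y)‖ := norm_integral_le_integral_norm _
      _ ≤ ∫ y : ℝ, c * Real.exp (-(r * |y|)) := by
          refine integral_mono_of_nonneg (Filter.Eventually.of_forall fun y => norm_nonneg _)
            (hIint.const_mul c) (Filter.Eventually.of_forall fun y => ?_)
          have hmv : ‖(M y).mulVec (V y)‖ ≤ 2 * (C * Real.exp (-|y| / β)) * ‖V y‖ :=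
            mv_bound _ _ (by positivity) (fun i j => hM y i j) _
          calc ‖G (x - y) • (M y).mulVec (V y)‖
              = G (x - y) * ‖(M y).mulVec (V y)‖ := by
                rw [norm_smul, Real.norm_eq_abs, abs_of_nonneg (hGnn _)]
            _ ≤ G (x - y) * (2 * C * Real.exp (-|y| / β) * ‖V y‖) := by
                rw [show 2 * C * Real.exp (-|y| / β) = 2 * (C * Real.exp (-|y| / β)) by ring]
                exact mul_le_mul_of_nonneg_left hmv (hGnn _)
            _ ≤ c * Real.exp (-(r * |y|)) := hpt y
      _ = c * I := integral_const_mul c _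
  have habs : ∀ x y : ℝ, |x| ≤ |x - y| + |y| := by
    intro x y; simpa using abs_add_le (x - y) y
  -- Step 2: intermediate bound
  set D : ℝ := C * K / β * I with hD
  have hD0 : 0 ≤ D := by positivity
  have step2 : ∀ x, ‖V x‖ ≤ D * Real.exp (-(r * |x|)) := by
    intro x
    have h := master x (C * K / β * Real.exp (-(r * |x|))) ?_
    · calc ‖V x‖ ≤ C * K / β * Real.exp (-(r * |x|)) * I := h
        _ = D * Real.exp (-(r * |x|)) := by rw [hD]; ring
    · intro y
      rw [hG]
      have hexp : -|x - y| / β + -|y| / β ≤ -(r * |x|) + -(r * |y|) := by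
        have e1 : -|x - y| / β + -|y| / β = -(2 * r * |x - y|) + -(2 * r * |y|) := by
          rw [div_eq_mul_inv, div_eq_mul_inv, hb]; ring
        rw [e1]
        nlinarith [mul_le_mul_of_nonneg_left (habs x y) hrpos.le,
          mul_nonneg hrpos.le (abs_nonneg y), mul_nonneg hrpos.le (abs_nonneg (x - y))]
      calc 1 / (2 * β) * Real.exp (-|x - y| / β) * (2 * C * Real.exp (-|y| / β) * ‖V y‖)
          ≤ 1 / (2 * β) * Real.exp (-|x - y| / β) * (2 * C * Real.exp (-|y| / β) * K) := by
            gcongr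
            exact hK y
        _ = C * K / β * Real.exp (-|x - y| / β + -|y| / β) := by
            rw [Real.exp_add]; ring
        _ ≤ C * K / β * Real.exp (-(r * |x|) + -(r * |y|)) := by
            exact mul_le_mul_of_nonneg_left (Real.exp_le_exp.mpr hexp) (by positivity)
        _ = C * K / β * Real.exp (-(r * |x|)) * Real.exp (-(r * |y|)) := by
            rw [Real.exp_add]; ring
  -- Step 3: final bound
  refine ⟨2 * C * D * I, fun x => ?_⟩
  have h := master x (C * D / β * Real.exp (-|x| / β)) ?_
  · calc ‖V x‖ ≤ C * D / β * Real.exp (-|x| / β) * I := h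
      _ = 2 * C * D * I * G x := by
          rw [hG]
          show C * D / β * Real.exp (-|x| / β) * I = 2 * C * D * I * (r * Real.exp (-|x| / β))
          rw [div_eq_mul_inv, hb]
          ring
  · intro y
    rw [hG]
    have hexp : -|x - y| / β + -|y| / β ≤ -|x| / β := by
      rw [← add_div, div_le_div_iff_of_pos_right hβ]
      linarith [habs x y]
    calc 1 / (2 * β) * Real.exp (-|x - y| / β) * (2 * C * Real.exp (-|y| / β) * ‖V y‖)
        ≤ 1 / (2 * β) * Real.exp (-|x - y| / β) *
            (2 * C * Real.exp (-|y| / β) * (D * Real.exp (-(r * |y|)))) := by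
          gcongr
          exact step2 y
      _ = C * D / β * Real.exp (-|x - y| / β + -|y| / β) * Real.exp (-(r * |y|)) := by
          rw [Real.exp_add]; ring
      _ ≤ C * D / β * Real.exp (-|x| / β) * Real.exp (-(r * |y|)) := by
          exact mul_le_mul_of_nonneg_right
            (mul_le_mul_of_nonneg_left (Real.exp_le_exp.mpr hexp) (by positivity))
            (Real.exp_pos _).le
end

section
/- Define G(z,t) = (-20 + 13/t)z³ + (-60 + 33/t + 32t)z² + (-39 + 18/t + 32t)z - 9 for t > 1, z > 0. Then for every t > 2.264 and every z with 0 < z < 1/t², one has G(z,t) < 0. -/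
theorem stmt_12 (G : ℝ → ℝ → ℝ)
    (hG : G = fun z t => (-20 + 13 / t) * z^3 + (-60 + 33 / t + 32 * t) * z^2
      + (-39 + 18 / t + 32 * t) * z - 9) :
    ∀ t z : ℝ, 2.264 < t → 0 < z → z < 1 / t^2 → G z t < 0 := by
  subst hG
  intro t z ht hz hz2
  have ht0 : (0:ℝ) < t := by linarith
  have ht2 : (0:ℝ) < t^2 := by positivity
  have hzt : z * t^2 < 1 := (lt_div_iff₀ ht2).mp hz2
  have hs : (0:ℝ) < t - 2.264 := by linarith
  -- one-variable polynomial negativity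
  have hq : -9*t^7+32*t^6-39*t^5+50*t^4-60*t^3+33*t^2-20*t+13 < 0 := by
    nlinarith [pow_pos hs 2, pow_pos hs 3, pow_pos hs 4, pow_pos hs 5, pow_pos hs 6,
      pow_pos hs 7, sq_nonneg (t-2.264), mul_pos hs hs]
  -- bracket positivity
  have hB : (0:ℝ) < (13-20*t)*(t^5*z^2+t^3*z+t)+(32*t^2-60*t+33)*(t^5*z+t^3)
      +(32*t^2-39*t+18)*t^5 := by
    have hsq : z * t^2 * (z * t^2) < 1 := by nlinarith [mul_pos (sub_pos.mpr hzt) (mul_pos hz ht2)]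
    have h1 : t^5*z^2 < t := by nlinarith [mul_lt_mul_of_pos_left hsq ht0]
    have h2 : t^3*z < t := by nlinarith [pow_pos ht0 1]
    nlinarith [pow_pos ht0 3, pow_pos ht0 5, mul_pos (pow_pos ht0 5) hz,
      mul_pos (pow_pos ht0 3) hz, mul_pos hs (pow_pos ht0 5)]
  -- combine via the key identity
  have key : t^8 * ((-20 + 13 / t) * z^3 + (-60 + 33 / t + 32 * t) * z^2
      + (-39 + 18 / t + 32 * t) * z - 9) < 0 := by
    have hid : t^8 * ((-20 + 13 / t) * z^3 + (-60 + 33 / t + 32 * t) * z^2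
        + (-39 + 18 / t + 32 * t) * z - 9)
        = t * (-9*t^7+32*t^6-39*t^5+50*t^4-60*t^3+33*t^2-20*t+13)
          + (z*t^2-1) * ((13-20*t)*(t^5*z^2+t^3*z+t)+(32*t^2-60*t+33)*(t^5*z+t^3)
            +(32*t^2-39*t+18)*t^5) := by
      field_simp
      ring
    rw [hid]
    have hneg : z*t^2-1 < 0 := by linarith
    nlinarith [mul_pos ht0 (neg_pos.mpr hq), mul_pos (neg_pos.mpr hneg) hB]
  have ht8 : (0:ℝ) < t^8 := by positivity
  simp only []
  nlinarith [key, ht8]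
end

section
/- Let λ > 1 and set ū = (3λ - √(λ²+8))/2 and η̄ = ū/(λ - ū). Then the inequality ūη̄ - (λ/2)ū² - (λ/2)η̄² + (1/6)ū³ + (1/2)ūη̄² ≥ 0 is false; equivalently (λ - ū)(ū/3 - λ) + 1 < 0. -/
theorem stmt_14 (lam : ℝ) (hlam : 1 < lam)
    (ubar ebar : ℝ)
    (hu : ubar = (3 * lam - Real.sqrt (lam^2 + 8)) / 2)
    (he : ebar = ubar / (lam - ubar)) :
    ¬ (ubar * ebar - (lam / 2) * ubar^2 - (lam / 2) * ebar^2
        + (1/6) * ubar^3 + (1/2) * ubar * ebar^2 ≥ 0) ∧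
    (lam - ubar) * (ubar / 3 - lam) + 1 < 0 := by
  set s := Real.sqrt (lam^2 + 8) with hs
  have hs0 : 0 ≤ s := Real.sqrt_nonneg _
  have hs2 : s^2 = lam^2 + 8 := Real.sq_sqrt (by nlinarith)
  have hsl : lam < s := by nlinarith
  have hs3l : s < 3 * lam := by nlinarith
  have hkey : lam^2 + 2 < lam * s := by nlinarith [sq_nonneg (lam * s - lam^2 - 2)]
  have hu0 : 0 < ubar := by rw [hu]; linarith
  have hd : 0 < lam - ubar := by rw [hu]; linarith
  have h2 : (lam - ubar) * (ubar / 3 - lam) + 1 < 0 := by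
    rw [hu]; nlinarith
  refine ⟨?_, h2⟩
  intro hge
  have hE : (ubar * ebar - (lam / 2) * ubar^2 - (lam / 2) * ebar^2
        + (1/6) * ubar^3 + (1/2) * ubar * ebar^2) * (6 * (lam - ubar)^2)
      = ubar^2 * (lam - ubar) * (3 * ((lam - ubar) * (ubar / 3 - lam) + 1)) := by
    rw [he]; field_simp; ring
  nlinarith [mul_pos (mul_pos (pow_pos hu0 2) hd) (by linarith : (0:ℝ) < -(3 * ((lam - ubar) * (ubar / 3 - lam) + 1))), sq_nonneg (lam - ubar)]
end
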